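/- Let ψ : [a,b] → ℂ be continuous and define F(z) = ∫_a^b ψ(u)/(u-z) du for z ∉ [a,b]. If there exist C, R > 0 such that |F(z)| ≤ C/|z|² for all |z| ≥ R, then ∫_a^b ψ(u) du = 0. -/

import Mathlib

/-!
Since `1 + z / (u - z) = u / (u - z)`, we have
`z F(z) = -∫ ψ + ∫ ψ(u) u / (u - z) du`, and the last integral tends to `0` as `z → ∞` by dominated
convergence. Hence `z F(z) → -∫ ψ`, while the decay `|F(z)| ≤ C / |z|²` forces `z F(z) → 0`.
-/

open Filter Topology Bornology Set MeasureTheory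

instance Bornology.isCountablyGenerated_cobounded {E : Type*} [SeminormedAddGroup E] :
    (cobounded E).IsCountablyGenerated :=
  comap_norm_atTop (E := E) ▸ inferInstance

lemma Bornology.IsBounded.eventually_cobounded_one_le_norm_sub {E : Type*}
    [SeminormedAddCommGroup E] {s : Set E} (hs : IsBounded s) :
    ∀ᶠ z in cobounded E, ∀ u ∈ s, 1 ≤ ‖u - z‖ := by
  obtain ⟨r, hr⟩ := hs.subset_closedBall 0
  filter_upwards [tendsto_norm_cobounded_atTop.eventually_ge_atTop (r + 1)] with z hz u hu
  have hur : ‖u‖ ≤ r := by simpa using hr hu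
  calc 1 ≤ ‖z‖ - ‖u‖ := by linarith
    _ ≤ ‖u - z‖ := norm_sub_rev u z ▸ norm_sub_norm_le z u

lemma eventually_cobounded_one_le_norm_ofReal_sub (a b : ℝ) :
    ∀ᶠ z in cobounded ℂ, ∀ u ∈ uIcc a b, 1 ≤ ‖(u : ℂ) - z‖ := by
  have hS : IsBounded ((↑) '' uIcc a b : Set ℂ) :=
    (isCompact_uIcc.image Complex.continuous_ofReal).isBounded
  filter_upwards [hS.eventually_cobounded_one_le_norm_sub] with z hz u hu
  exact hz _ (mem_image_of_mem _ hu)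

theorem tendsto_integral_div_ofReal_sub_cobounded {g : ℝ → ℂ} {a b : ℝ}
    (hg : IntervalIntegrable g volume a b) :
    Tendsto (fun z : ℂ => ∫ u in a..b, g u / ((u : ℂ) - z)) (cobounded ℂ) (𝓝 0) := by
  rw [← intervalIntegral.integral_zero (a := a) (b := b) (μ := volume) (E := ℂ)]
  refine intervalIntegral.tendsto_integral_filter_of_dominated_convergence (fun u => ‖g u‖)
    (Eventually.of_forall fun z => ?_) ?_ hg.norm (ae_of_all _ fun u _ => ?_)
  · exact hg.def'.1.div₀ (by fun_prop)
  · filter_upwards [eventually_cobounded_one_le_norm_ofReal_sub a b] with z hz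
    refine ae_of_all _ fun u hu => ?_
    rw [norm_div]
    exact div_le_self (norm_nonneg _) (hz u (uIoc_subset_uIcc hu))
  · simpa [div_eq_mul_inv] using
      tendsto_const_nhds.mul (tendsto_inv₀_cobounded.comp (tendsto_const_sub_cobounded (u : ℂ)))

noncomputable def cauchyTransform (ψ : ℝ → ℂ) (a b : ℝ) (z : ℂ) : ℂ :=
  ∫ u in a..b, ψ u / ((u : ℂ) - z)

theorem tendsto_mul_cauchyTransform_cobounded {ψ : ℝ → ℂ} {a b : ℝ}
    (hψ : IntervalIntegrable ψ volume a b) :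
    Tendsto (fun z => z * cauchyTransform ψ a b z) (cobounded ℂ) (𝓝 (-∫ u in a..b, ψ u)) := by
  have hψu : IntervalIntegrable (fun u => ψ u * u) volume a b :=
    hψ.mul_continuousOn Complex.continuous_ofReal.continuousOn
  have hlim := (tendsto_integral_div_ofReal_sub_cobounded hψu).sub_const (∫ u in a..b, ψ u)
  rw [zero_sub] at hlim
  refine hlim.congr' ?_
  filter_upwards [eventually_cobounded_one_le_norm_ofReal_sub a b] with z hz
  rw [cauchyTransform, ← intervalIntegral.integral_const_mul, ← intervalIntegral.integral_sub _ hψ]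
  · refine intervalIntegral.integral_congr fun u hu => ?_
    have hne : (u : ℂ) - z ≠ 0 := norm_pos_iff.1 (one_pos.trans_le (hz u hu))
    field_simp
    ring
  · have hinv : ContinuousOn (fun u : ℝ => ((u : ℂ) - z)⁻¹) (uIcc a b) :=
      (Complex.continuous_ofReal.continuousOn.sub continuousOn_const).inv₀
        fun u hu => norm_pos_iff.1 (one_pos.trans_le (hz u hu))
    simpa only [div_eq_mul_inv] using hψu.mul_continuousOn hinv

theorem tendsto_mul_cobounded_of_norm_le_div_sq {𝕜 : Type*} [NormedField 𝕜] {F : 𝕜 → 𝕜}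
    {C R : ℝ} (hF : ∀ z, R ≤ ‖z‖ → ‖F z‖ ≤ C / ‖z‖ ^ 2) :
    Tendsto (fun z => z * F z) (cobounded 𝕜) (𝓝 0) := by
  refine squeeze_zero_norm' ?_
    (tendsto_const_nhds (x := C) |>.div_atTop tendsto_norm_cobounded_atTop)
  filter_upwards [tendsto_norm_cobounded_atTop.eventually_ge_atTop (max R 1)] with z hz
  have hz0 : 0 < ‖z‖ := one_pos.trans_le (le_of_max_le_right hz)
  calc ‖z * F z‖ = ‖z‖ * ‖F z‖ := norm_mul _ _
    _ ≤ ‖z‖ * (C / ‖z‖ ^ 2) := by gcongr; exact hF z (le_of_max_le_left hz)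
    _ = C / ‖z‖ := by field_simp

theorem zero_mass_lemma (a b : ℝ) (hab : a ≤ b) (ψ : ℝ → ℂ)
    (hψ : ContinuousOn ψ (Set.Icc a b))
    (F : ℂ → ℂ) (hF : ∀ z : ℂ, z ∉ ((↑) '' Set.Icc a b : Set ℂ) →
      F z = ∫ u in a..b, ψ u / ((u : ℂ) - z))
    (hdecay : ∃ C > 0, ∃ R > 0, ∀ z : ℂ, R ≤ ‖z‖ → ‖F z‖ ≤ C / ‖z‖ ^ 2) :
    (∫ u in a..b, ψ u) = 0 := by
  obtain ⟨C, -, R, -, hdec⟩ := hdecay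
  have hS : IsBounded ((↑) '' Set.Icc a b : Set ℂ) :=
    (isCompact_Icc.image Complex.continuous_ofReal).isBounded
  have hFeq : (fun z => z * cauchyTransform ψ a b z) =ᶠ[cobounded ℂ] fun z => z * F z := by
    filter_upwards [isBounded_def.1 hS] with z hz
    rw [hF z hz, cauchyTransform]
  have hlim := (tendsto_mul_cauchyTransform_cobounded (hψ.intervalIntegrable_of_Icc hab)).congr' hFeq
  exact neg_eq_zero.1 (tendsto_nhds_unique hlim (tendsto_mul_cobounded_of_norm_le_div_sq hdec))
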